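/- arXiv:1706.10049 — 2 statements merged into one kernel-verified Lean document; each statement's English description precedes it below -/
import Mathlib

section
/- For subdistributions μ, ν of an LMP: μ ∼_d ν implies d^c(μ,ν) = 0 for all c ∈ (0,1], and conversely if d^c(μ,ν) = 0 for some c ∈ (0,1] then μ ∼_d ν. -/
/-!
Both conditions are equivalent to trace equivalence: `μ` and `ν` give the same mass after every
word. A bisimulation is closed under words and preserves mass, so `d^c` vanishes on bisimilar
pairs. Conversely, every summand of `d^c` lies in `[0, 1]`, so the real supremum is not the junk
value of an unbounded family and `d^c = 0` forces every summand to vanish; as `c > 0` this gives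
trace equivalence, and trace equivalence between subdistributions is itself a bisimulation.
-/

open MeasureTheory ProbabilityTheory Filter

/-- A (sub)distribution: a measure of total mass at most 1. -/
def IsSubdist {S : Type*} [MeasurableSpace S] (μ : Measure S) : Prop :=
  μ Set.univ ≤ 1

/-- A family of sub-Markov transition kernels (labelled Markov process). -/
def IsSubMarkov {S A : Type*} [MeasurableSpace S] (τ : A → Kernel S S) : Prop :=
  ∀ a s, τ a s Set.univ ≤ 1

/-- One-step transition on subdistributions: μ →^a (step τ a μ). -/
noncomputable def step {S A : Type*} [MeasurableSpace S] (τ : A → Kernel S S)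
    (a : A) (μ : Measure S) : Measure S :=
  μ.bind (τ a)

/-- Multi-step transition along a word. -/
noncomputable def wstep {S A : Type*} [MeasurableSpace S] (τ : A → Kernel S S) :
    List A → Measure S → Measure S
  | [], μ => μ
  | a :: w, μ => wstep τ w (step τ a μ)

/-- Subdistribution bisimulation relation. -/
def IsDBisim {S A : Type*} [MeasurableSpace S] (τ : A → Kernel S S)
    (R : Measure S → Measure S → Prop) : Prop :=
  Symmetric R ∧
  (∀ μ ν, R μ ν → IsSubdist μ ∧ IsSubdist ν) ∧
  ∀ μ ν, R μ ν → μ Set.univ = ν Set.univ ∧ ∀ a, R (step τ a μ) (step τ a ν)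

/-- Subdistribution bisimilarity. -/
def DBisim {S A : Type*} [MeasurableSpace S] (τ : A → Kernel S S)
    (μ ν : Measure S) : Prop :=
  ∃ R, IsDBisim τ R ∧ R μ ν

/-- The discounted trace pseudometric `d^c`. -/
noncomputable def dC {S A : Type*} [MeasurableSpace S] (τ : A → Kernel S S)
    (c : ℝ) (μ ν : Measure S) : ℝ :=
  ⨆ w : List A, c ^ w.length *
    |(wstep τ w μ Set.univ).toReal - (wstep τ w ν Set.univ).toReal|

section

variable {S A : Type*} [MeasurableSpace S] {τ : A → Kernel S S} {μ ν : Measure S}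

def TraceEquiv (τ : A → Kernel S S) (μ ν : Measure S) : Prop :=
  ∀ w : List A, wstep τ w μ Set.univ = wstep τ w ν Set.univ

theorem TraceEquiv.symm (h : TraceEquiv τ μ ν) : TraceEquiv τ ν μ :=
  fun w => (h w).symm

theorem TraceEquiv.step (h : TraceEquiv τ μ ν) (a : A) :
    TraceEquiv τ (step τ a μ) (step τ a ν) :=
  fun w => h (a :: w)

theorem IsSubdist.step (hτ : IsSubMarkov τ) (hμ : IsSubdist μ) (a : A) :
    IsSubdist (step τ a μ) := by
  unfold IsSubdist _root_.step at *
  rw [Measure.bind_apply MeasurableSet.univ (τ a).measurable.aemeasurable]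
  calc ∫⁻ s, τ a s Set.univ ∂μ ≤ ∫⁻ _, 1 ∂μ := lintegral_mono (hτ a)
    _ = μ Set.univ := by simp
    _ ≤ 1 := hμ

theorem IsSubdist.wstep (hτ : IsSubMarkov τ) (hμ : IsSubdist μ) (w : List A) :
    IsSubdist (wstep τ w μ) := by
  induction w generalizing μ with
  | nil => exact hμ
  | cons a w ih => exact ih (hμ.step hτ a)

theorem IsDBisim.wstep {R : Measure S → Measure S → Prop} (hR : IsDBisim τ R) (h : R μ ν)
    (w : List A) : R (wstep τ w μ) (wstep τ w ν) := by
  induction w generalizing μ ν with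
  | nil => exact h
  | cons a w ih => exact ih ((hR.2.2 μ ν h).2 a)

theorem DBisim.traceEquiv (h : DBisim τ μ ν) : TraceEquiv τ μ ν := by
  obtain ⟨R, hR, hμν⟩ := h
  exact fun w => (hR.2.2 _ _ (hR.wstep hμν w)).1

theorem isDBisim_subdist_traceEquiv (hτ : IsSubMarkov τ) :
    IsDBisim τ fun μ ν => IsSubdist μ ∧ IsSubdist ν ∧ TraceEquiv τ μ ν :=
  ⟨fun _ _ ⟨hμ, hν, h⟩ => ⟨hν, hμ, h.symm⟩,
    fun _ _ ⟨hμ, hν, _⟩ => ⟨hμ, hν⟩,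
    fun _ _ ⟨hμ, hν, h⟩ => ⟨h [], fun a => ⟨hμ.step hτ a, hν.step hτ a, h.step a⟩⟩⟩

theorem dbisim_of_traceEquiv (hτ : IsSubMarkov τ) (hμ : IsSubdist μ) (hν : IsSubdist ν)
    (h : TraceEquiv τ μ ν) : DBisim τ μ ν :=
  ⟨_, isDBisim_subdist_traceEquiv hτ, hμ, hν, h⟩

theorem dC_eq_zero_of_traceEquiv (h : TraceEquiv τ μ ν) (c : ℝ) : dC τ c μ ν = 0 := by
  simp [dC, h _]

theorem abs_toReal_sub_toReal_le_one {x y : ENNReal} (hx : x ≤ 1) (hy : y ≤ 1) :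
    |x.toReal - y.toReal| ≤ 1 := by
  have hx' : x.toReal ≤ 1 := ENNReal.toReal_le_of_le_ofReal zero_le_one (by simpa using hx)
  have hy' : y.toReal ≤ 1 := ENNReal.toReal_le_of_le_ofReal zero_le_one (by simpa using hy)
  rw [abs_sub_le_iff]
  constructor <;> linarith [x.toReal_nonneg, y.toReal_nonneg]

theorem IsSubdist.measure_univ_ne_top (hμ : IsSubdist μ) : μ Set.univ ≠ ⊤ :=
  ne_top_of_le_ne_top ENNReal.one_ne_top hμ

theorem bddAbove_range_dC_summand (hτ : IsSubMarkov τ) (hμ : IsSubdist μ) (hν : IsSubdist ν)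
    {c : ℝ} (hc₀ : 0 ≤ c) (hc₁ : c ≤ 1) :
    BddAbove (Set.range fun w : List A => c ^ w.length *
      |(wstep τ w μ Set.univ).toReal - (wstep τ w ν Set.univ).toReal|) :=
  ⟨1, Set.forall_mem_range.2 fun w => mul_le_one₀ (pow_le_one₀ hc₀ hc₁) (abs_nonneg _)
    (abs_toReal_sub_toReal_le_one (hμ.wstep hτ w) (hν.wstep hτ w))⟩

theorem traceEquiv_of_dC_eq_zero (hτ : IsSubMarkov τ) (hμ : IsSubdist μ) (hν : IsSubdist ν)
    {c : ℝ} (hc : c ∈ Set.Ioc 0 1) (h : dC τ c μ ν = 0) : TraceEquiv τ μ ν := by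
  intro w
  have hterm : c ^ w.length *
      |(wstep τ w μ Set.univ).toReal - (wstep τ w ν Set.univ).toReal| = 0 :=
    le_antisymm (h ▸ le_ciSup (bddAbove_range_dC_summand hτ hμ hν hc.1.le hc.2) w)
      (mul_nonneg (pow_nonneg hc.1.le _) (abs_nonneg _))
  have hmass : (wstep τ w μ Set.univ).toReal = (wstep τ w ν Set.univ).toReal := by
    simpa [sub_eq_zero, (pow_pos hc.1 w.length).ne'] using hterm
  exact (ENNReal.toReal_eq_toReal_iff' ((hμ.wstep hτ w).measure_univ_ne_top)
    ((hν.wstep hτ w).measure_univ_ne_top)).1 hmass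

end

/-- The metric `d^c` characterises subdistribution bisimilarity. -/
theorem dbisim_iff_dC_eq_zero {S A : Type*} [MeasurableSpace S]
    (τ : A → Kernel S S) (hτ : IsSubMarkov τ) (μ ν : Measure S)
    (hμ : IsSubdist μ) (hν : IsSubdist ν) :
    (DBisim τ μ ν → ∀ c ∈ Set.Ioc (0:ℝ) 1, dC τ c μ ν = 0) ∧
    ((∃ c ∈ Set.Ioc (0:ℝ) 1, dC τ c μ ν = 0) → DBisim τ μ ν) :=
  ⟨fun h c _ => dC_eq_zero_of_traceEquiv h.traceEquiv c,
    fun ⟨_, hc, h⟩ => dbisim_of_traceEquiv hτ hμ hν (traceEquiv_of_dC_eq_zero hτ hμ hν hc h)⟩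
end

section
/- Subdistribution bisimilarity is continuous: if μ_i ∼_d ν_i for all i, μ_i → μ and ν_i → ν setwise (μ_i(A) → μ(A) and ν_i(A) → ν(A) for every measurable A), then μ ∼_d ν. -/
open MeasureTheory ProbabilityTheory Filter

/-- Setwise convergence of a sequence of (sub)measures. -/
def SetwiseTendsto {S : Type*} [MeasurableSpace S]
    (μs : ℕ → Measure S) (μ : Measure S) : Prop :=
  ∀ B : Set S, MeasurableSet B → Tendsto (fun i => μs i B) atTop (nhds (μ B))


/-! Setwise limits of bisimilar pairs form a bisimulation. Total masses pass to the limit, and a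
step along a sub-Markov kernel preserves setwise convergence, because `step τ a μ B` is the integral
against `μ` of the measurable function `s ↦ τ a s B`, which is bounded by `1`. -/

open scoped ENNReal NNReal Topology

namespace SetwiseTendsto

variable {S : Type*} [MeasurableSpace S] {μs : ℕ → Measure S} {μ : Measure S}

theorem isSubdist (h : SetwiseTendsto μs μ) (hμs : ∀ i, IsSubdist (μs i)) : IsSubdist μ :=
  le_of_tendsto' (h Set.univ MeasurableSet.univ) hμs

/-- Write `∫⁻ f = ∫₀^∞ μ {f > t} dt` (layer cake); setwise convergence gives pointwise convergence
of the integrand in `t`, dominated by `M · 𝟙_(0, C]`. -/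
theorem tendsto_lintegral (h : SetwiseTendsto μs μ) {M : ℝ≥0∞} (hM : M ≠ ∞)
    (hμs : ∀ i, μs i Set.univ ≤ M) {f : S → ℝ≥0∞} (hf : Measurable f) {C : ℝ≥0}
    (hfC : ∀ s, f s ≤ C) :
    Tendsto (fun i => ∫⁻ s, f s ∂μs i) atTop (𝓝 (∫⁻ s, f s ∂μ)) := by
  set g : S → ℝ := fun s => (f s).toReal
  have hg : Measurable g := hf.ennreal_toReal
  have hgC : ∀ s, g s ≤ C := fun s => ENNReal.toReal_le_coe_of_le_coe (hfC s)
  have layer_cake (m : Measure S) : ∫⁻ s, f s ∂m = ∫⁻ t in Set.Ioi 0, m {s | t < g s} := by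
    rw [← lintegral_eq_lintegral_meas_lt m (.of_forall fun _ => ENNReal.toReal_nonneg)
      hg.aemeasurable]
    congr with s
    exact (ENNReal.ofReal_toReal ((hfC s).trans_lt ENNReal.coe_lt_top).ne).symm
  simp_rw [layer_cake]
  refine tendsto_lintegral_of_dominated_convergence (Set.indicator (Set.Ioc 0 C) fun _ => M)
    (fun i => Antitone.measurable fun t t' htt' => measure_mono fun s hs => htt'.trans_lt hs)
    (fun i => ?_) ?_ (.of_forall fun t => h _ (hg measurableSet_Ioi))
  · filter_upwards [ae_restrict_mem measurableSet_Ioi] with t (ht : 0 < t)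
    by_cases htC : t ≤ C
    · rw [Set.indicator_of_mem (Set.mem_Ioc.2 ⟨ht, htC⟩)]
      exact (measure_mono (Set.subset_univ _)).trans (hμs i)
    · have hempty : {s | t < g s} = ∅ :=
        Set.eq_empty_of_forall_notMem fun s hs => htC ((le_of_lt hs).trans (hgC s))
      simp [hempty]
  · rw [lintegral_indicator_const measurableSet_Ioc]
    exact ENNReal.mul_ne_top hM ((Measure.restrict_apply_le _ _).trans_lt measure_Ioc_lt_top).ne

end SetwiseTendsto

section Step

variable {S A : Type*} [MeasurableSpace S] {τ : A → Kernel S S}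

theorem step_apply (a : A) (μ : Measure S) {B : Set S} (hB : MeasurableSet B) :
    step τ a μ B = ∫⁻ s, τ a s B ∂μ :=
  Measure.bind_apply hB (τ a).measurable.aemeasurable

theorem SetwiseTendsto.step (hτ : IsSubMarkov τ) (a : A) {μs : ℕ → Measure S} {μ : Measure S}
    (h : SetwiseTendsto μs μ) (hμs : ∀ i, IsSubdist (μs i)) :
    SetwiseTendsto (fun i => step τ a (μs i)) (step τ a μ) := by
  intro B hB
  simp_rw [step_apply a _ hB]
  exact h.tendsto_lintegral ENNReal.one_ne_top hμs ((τ a).measurable_coe hB) (C := 1)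
    fun s => by simpa using (measure_mono (Set.subset_univ B)).trans (hτ a s)

end Step

namespace DBisim

variable {S A : Type*} [MeasurableSpace S] {τ : A → Kernel S S} {μ ν : Measure S}

theorem symm (h : DBisim τ μ ν) : DBisim τ ν μ :=
  let ⟨_, hR, hμν⟩ := h
  ⟨_, hR, hR.1 hμν⟩

theorem isSubdist_left (h : DBisim τ μ ν) : IsSubdist μ :=
  let ⟨_, hR, hμν⟩ := h
  (hR.2.1 _ _ hμν).1

theorem measure_univ_eq (h : DBisim τ μ ν) : μ Set.univ = ν Set.univ :=
  let ⟨_, hR, hμν⟩ := h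
  (hR.2.2 _ _ hμν).1

theorem step (h : DBisim τ μ ν) (a : A) : DBisim τ (step τ a μ) (step τ a ν) :=
  let ⟨_, hR, hμν⟩ := h
  ⟨_, hR, (hR.2.2 _ _ hμν).2 a⟩

end DBisim

def SetwiseDBisimLimit {S A : Type*} [MeasurableSpace S] (τ : A → Kernel S S)
    (μ ν : Measure S) : Prop :=
  ∃ μs νs : ℕ → Measure S,
    (∀ i, DBisim τ (μs i) (νs i)) ∧ SetwiseTendsto μs μ ∧ SetwiseTendsto νs ν

theorem isDBisim_setwiseDBisimLimit {S A : Type*} [MeasurableSpace S] {τ : A → Kernel S S}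
    (hτ : IsSubMarkov τ) : IsDBisim τ (SetwiseDBisimLimit τ) := by
  refine ⟨?symm, ?subdist, ?transfer⟩
  case symm =>
    rintro μ ν ⟨μs, νs, hbis, hμ, hν⟩
    exact ⟨νs, μs, fun i => (hbis i).symm, hν, hμ⟩
  case subdist =>
    rintro μ ν ⟨μs, νs, hbis, hμ, hν⟩
    exact ⟨hμ.isSubdist fun i => (hbis i).isSubdist_left,
      hν.isSubdist fun i => (hbis i).symm.isSubdist_left⟩
  case transfer =>
    rintro μ ν ⟨μs, νs, hbis, hμ, hν⟩
    have hmass : Tendsto (fun i => νs i Set.univ) atTop (𝓝 (μ Set.univ)) := by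
      simpa only [(hbis _).measure_univ_eq] using hμ Set.univ MeasurableSet.univ
    refine ⟨tendsto_nhds_unique hmass (hν Set.univ MeasurableSet.univ), fun a => ?_⟩
    exact ⟨_, _, fun i => (hbis i).step a,
      hμ.step hτ a fun i => (hbis i).isSubdist_left,
      hν.step hτ a fun i => (hbis i).symm.isSubdist_left⟩

theorem dbisim_continuous_general {S A : Type*} [MeasurableSpace S]
    (τ : A → Kernel S S) (hτ : IsSubMarkov τ)
    (μs νs : ℕ → Measure S) (μ ν : Measure S)
    (hbis : ∀ i, DBisim τ (μs i) (νs i))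
    (hμconv : SetwiseTendsto μs μ) (hνconv : SetwiseTendsto νs ν) :
    DBisim τ μ ν :=
  ⟨_, isDBisim_setwiseDBisimLimit hτ, μs, νs, hbis, hμconv, hνconv⟩

/-- Subdistribution bisimilarity is continuous w.r.t. setwise convergence. -/
theorem dbisim_continuous {S A : Type*} [MeasurableSpace S]
    (τ : A → Kernel S S) (hτ : IsSubMarkov τ)
    (μs νs : ℕ → Measure S) (μ ν : Measure S)
    (hsub : ∀ i, IsSubdist (μs i) ∧ IsSubdist (νs i))
    (hμ : IsSubdist μ) (hν : IsSubdist ν)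
    (hbis : ∀ i, DBisim τ (μs i) (νs i))
    (hμconv : SetwiseTendsto μs μ) (hνconv : SetwiseTendsto νs ν) :
    DBisim τ μ ν :=
  dbisim_continuous_general τ hτ μs νs μ ν hbis hμconv hνconv
end
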